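/- Let λ = (λ_1 ≥ λ_2 ≥ ⋯ ≥ λ_ℓ) be a partition of n = p + q and assume syd(λ;p,q) ≠ ∅. Then the graph Γ(λ;p,q) is connected if and only if there exists 0 ≤ r ≤ ℓ such that λ_1, …, λ_r are all odd and λ_{r+1}, …, λ_ℓ are all even (the cases r = 0 and r = ℓ, i.e., all parts even or all parts odd, being allowed). -/

import Mathlib

open Finset

/-- A partition of `n`, given by the function `l` listing its parts in weakly
decreasing order: `l j = λ_j` is the `j`-th part for `1 ≤ j ≤ len`, and
`l j = 0` for `j > len`. -/
structure PartitionData : Type where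
  l : ℕ → ℕ
  len : ℕ
  anti : ∀ j, 1 ≤ j → l (j + 1) ≤ l j
  pos : ∀ j, 1 ≤ j → (0 < l j ↔ j ≤ len)

namespace PartitionData

/-- The multiplicity `m(i)` of `i` as a part of the partition. -/
def mult (P : PartitionData) (i : ℕ) : ℕ :=
  ((Finset.Icc 1 P.len).filter (fun j => P.l j = i)).card

/-- The finite set of (distinct) parts of the partition. -/
def partsSet (P : PartitionData) : Finset ℕ :=
  (Finset.Icc 1 P.len).image P.l

/-- The sum of the parts (i.e. the number `n` the partition partitions). -/
def boxSum (P : PartitionData) : ℕ := ∑ j ∈ Finset.Icc 1 P.len, P.l j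

/-- The number of odd parts of the partition. -/
def oddCount (P : PartitionData) : ℕ :=
  ((Finset.Icc 1 P.len).filter (fun j => Odd (P.l j))).card

end PartitionData

/-- A signed Young diagram of shape `P` and signature `(p, q)`, encoded by the
function `f` sending each part length `i` to `m_T⁺(i)`, the number of rows of
length `i` whose leading sign is `+`.  A row of length `i` with leading sign
`+` has `(i+1)/2` plus-boxes and `i/2` minus-boxes, and vice versa. -/
structure SYD (P : PartitionData) (p q : ℕ) : Type where
  f : ℕ → ℕ
  le_mult : ∀ i, f i ≤ P.mult i
  plus_eq : ∑ i ∈ P.partsSet, (f i * ((i + 1) / 2) + (P.mult i - f i) * (i / 2)) = p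
  minus_eq : ∑ i ∈ P.partsSet, (f i * (i / 2) + (P.mult i - f i) * ((i + 1) / 2)) = q

/-- `i` and `j` are consecutive distinct parts: `i > j` with no part strictly
in between (so if the distinct parts are `i_1 > ⋯ > i_k`, the pairs are
`(i_r, i_{r+1})`). -/
def Consec (P : PartitionData) (i j : ℕ) : Prop :=
  i ∈ P.partsSet ∧ j ∈ P.partsSet ∧ j < i ∧ ∀ x ∈ P.partsSet, ¬ (j < x ∧ x < i)

/-- `j` is the smallest part `i_k`. -/
def IsMinPart (P : PartitionData) (j : ℕ) : Prop :=
  j ∈ P.partsSet ∧ ∀ x ∈ P.partsSet, j ≤ x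

/-- Adjacency of signed Young diagrams with step `c`:
`π(T) - π(T') ∈ {±c(e_r - e_{r+1})} ∪ {±c e_k}` in the coordinates indexed by
the distinct parts `i_1 > ⋯ > i_k`. -/
def AdjRel (P : PartitionData) {p q : ℕ} (c : ℕ) (T T' : SYD P p q) : Prop :=
  (∃ i j, Consec P i j ∧ (∀ x, x ≠ i → x ≠ j → T.f x = T'.f x) ∧
    ((T.f i = T'.f i + c ∧ T'.f j = T.f j + c) ∨
      (T'.f i = T.f i + c ∧ T.f j = T'.f j + c)))
  ∨ (∃ j, IsMinPart P j ∧ (∀ x, x ≠ j → T.f x = T'.f x) ∧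
      (T.f j = T'.f j + c ∨ T'.f j = T.f j + c))

/-- The orbit graph `Γ(λ;p,q)` (type AIII). -/
def orbitGraph (P : PartitionData) (p q : ℕ) : SimpleGraph (SYD P p q) :=
  SimpleGraph.fromRel (AdjRel P 1)


/-!
In the coordinates `m⁺(i)` the signature fixes exactly one linear quantity, the number of
`+`-leading rows of odd length. So an edge moves a `+`-leading row between consecutive part
lengths of the same parity, or adds or removes one at the smallest part if that is even.

If an odd part `t` is smaller than an even part `e`, no edge carries a row of even length
across `t`, so the number of `+`-leading rows of even length `> t` is invariant, while changing
`m⁺(e)` by one does not change the signature.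

If every odd part exceeds every even part, each diagram descends along edges, for the
potential `∑ w(i) m⁺(i)` with `w` increasing on even and decreasing on odd lengths, to the
unique diagram without `+`-leading even rows whose `+`-leading odd rows are the longest ones.
-/

namespace SimpleGraph

variable {V : Type*} {G : SimpleGraph V}

theorem Reachable.apply_eq {α : Type*} (φ : V → α) (hφ : ∀ u v, G.Adj u v → φ u = φ v)
    {u v : V} (h : G.Reachable u v) : φ u = φ v := by
  rw [reachable_iff_reflTransGen] at h
  induction h with
  | refl => rfl
  | tail _ hadj ih => exact ih.trans (hφ _ _ hadj)

theorem connected_of_exists_adj_lt [Nonempty V] (φ : V → ℕ) (C : V → Prop)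
    (hC : ∀ u v, C u → C v → u = v) (hdesc : ∀ v, ¬ C v → ∃ w, G.Adj v w ∧ φ w < φ v) :
    G.Connected := by
  have hreach : ∀ n v, φ v = n → ∃ c, C c ∧ G.Reachable v c := by
    intro n
    induction n using Nat.strong_induction_on with
    | _ n ih =>
      intro v hv
      by_cases hCv : C v
      · exact ⟨v, hCv, .rfl⟩
      · obtain ⟨w, hvw, hlt⟩ := hdesc v hCv
        obtain ⟨c, hc, hwc⟩ := ih (φ w) (hv ▸ hlt) w rfl
        exact ⟨c, hc, hvw.reachable.trans hwc⟩
  refine (connected_iff G).mpr ⟨fun u v => ?_, inferInstance⟩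
  obtain ⟨c, hc, huc⟩ := hreach _ u rfl
  obtain ⟨c', hc', hvc'⟩ := hreach _ v rfl
  exact huc.trans ((hC c c' hc hc') ▸ hvc'.symm)

end SimpleGraph

namespace PartitionData

variable (P : PartitionData)

theorem l_le_l {j k : ℕ} (hj : 1 ≤ j) (hjk : j ≤ k) : P.l k ≤ P.l j := by
  induction k, hjk using Nat.le_induction with
  | base => exact le_rfl
  | succ k hjk ih => exact (P.anti k (hj.trans hjk)).trans ih

variable {P}

theorem mem_partsSet {i : ℕ} : i ∈ P.partsSet ↔ ∃ j, 1 ≤ j ∧ j ≤ P.len ∧ P.l j = i := by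
  simp [partsSet, and_assoc]

theorem pos_of_mem_partsSet {i : ℕ} (hi : i ∈ P.partsSet) : 0 < i := by
  obtain ⟨j, hj, hjl, rfl⟩ := mem_partsSet.mp hi
  exact (P.pos j hj).mpr hjl

theorem mult_pos {i : ℕ} (hi : i ∈ P.partsSet) : 0 < P.mult i := by
  obtain ⟨j, hj, hjl, rfl⟩ := mem_partsSet.mp hi
  exact card_pos.mpr ⟨j, by simp [hj, hjl]⟩

theorem mem_partsSet_of_mult_pos {i : ℕ} (hi : 0 < P.mult i) : i ∈ P.partsSet := by
  obtain ⟨j, hj⟩ := card_pos.mp hi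
  simp only [mem_filter, mem_Icc] at hj
  exact mem_partsSet.mpr ⟨j, hj.1.1, hj.1.2, hj.2⟩

theorem exists_consec_below {i : ℕ} (hi : i ∈ P.partsSet) (h : ∃ y ∈ P.partsSet, y < i) :
    ∃ j, Consec P i j := by
  obtain ⟨y, hy, hyi⟩ := h
  obtain ⟨j, hj, hmax⟩ := exists_max_image (P.partsSet.filter (· < i)) id ⟨y, by simp [hy, hyi]⟩
  simp only [mem_filter, id] at hj hmax
  exact ⟨j, hi, hj.1, hj.2, fun x hx hjx => (hmax x ⟨hx, hjx.2⟩).not_gt hjx.1⟩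

theorem exists_consec_above {j : ℕ} (hj : j ∈ P.partsSet) (h : ∃ y ∈ P.partsSet, j < y) :
    ∃ i, Consec P i j := by
  obtain ⟨y, hy, hjy⟩ := h
  obtain ⟨i, hi, hmin⟩ := exists_min_image (P.partsSet.filter (j < ·)) id ⟨y, by simp [hy, hjy]⟩
  simp only [mem_filter, id] at hi hmin
  exact ⟨i, hi.1, hj, hi.2, fun x hx hxi => (hmin x ⟨hx, hxi.1⟩).not_gt hxi.2⟩

def wsum (P : PartitionData) (w f : ℕ → ℕ) : ℕ := ∑ i ∈ P.partsSet, w i * f i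

theorem wsum_add (w f g : ℕ → ℕ) : P.wsum w (f + g) = P.wsum w f + P.wsum w g := by
  simp [wsum, mul_add, sum_add_distrib]

theorem wsum_single (w : ℕ → ℕ) {i : ℕ} (hi : i ∈ P.partsSet) :
    P.wsum w (Pi.single i 1) = w i := by
  simp [wsum, Pi.single_apply, hi]

theorem wsum_eq_of_add_single_eq {w f g : ℕ → ℕ} {i j : ℕ} (hi : i ∈ P.partsSet)
    (hj : j ∈ P.partsSet) (hw : i % 2 = j % 2 → w i = w j)
    (hodd : P.wsum (· % 2) f = P.wsum (· % 2) g) (h : f + Pi.single j 1 = g + Pi.single i 1) :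
    P.wsum w f = P.wsum w g := by
  have h₂ := congrArg (P.wsum (· % 2)) h
  have hw' := congrArg (P.wsum w) h
  simp only [wsum_add, wsum_single _ hi, wsum_single _ hj] at h₂ hw'
  rw [hw (by omega)] at hw'
  omega

theorem wsum_eq_of_eq_add_single {w f g : ℕ → ℕ} {j : ℕ} (hj : j ∈ P.partsSet)
    (hw : j % 2 = 0 → w j = 0) (hodd : P.wsum (· % 2) f = P.wsum (· % 2) g)
    (h : f = g + Pi.single j 1) : P.wsum w f = P.wsum w g := by
  have h₂ := congrArg (P.wsum (· % 2)) h
  have hw' := congrArg (P.wsum w) h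
  simp only [wsum_add, wsum_single _ hj] at h₂ hw'
  rw [hw (by omega)] at hw'
  omega

end PartitionData

open PartitionData

namespace SYD

variable {P : PartitionData} {p q : ℕ}

@[ext]
theorem ext {T T' : SYD P p q} (h : T.f = T'.f) : T = T' := by
  cases T; cases T'; cases h; rfl

theorem f_eq_zero_of_notMem (T : SYD P p q) {x : ℕ} (hx : x ∉ P.partsSet) : T.f x = 0 := by
  have := T.le_mult x
  have := mt mem_partsSet_of_mult_pos hx
  omega

theorem sum_plus_eq {f : ℕ → ℕ} (hf : ∀ i, f i ≤ P.mult i) :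
    ∑ i ∈ P.partsSet, (f i * ((i + 1) / 2) + (P.mult i - f i) * (i / 2)) =
      ∑ i ∈ P.partsSet, P.mult i * (i / 2) + P.wsum (· % 2) f := by
  rw [wsum, ← sum_add_distrib]
  refine sum_congr rfl fun i _ => ?_
  have hfi := Nat.mul_le_mul_right (i / 2) (hf i)
  rw [show (i + 1) / 2 = i / 2 + i % 2 by omega, Nat.mul_add, Nat.sub_mul]
  lia

theorem sum_minus_add {f : ℕ → ℕ} (hf : ∀ i, f i ≤ P.mult i) :
    ∑ i ∈ P.partsSet, (f i * (i / 2) + (P.mult i - f i) * ((i + 1) / 2)) + P.wsum (· % 2) f =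
      ∑ i ∈ P.partsSet, P.mult i * (i / 2) + P.wsum (· % 2) P.mult := by
  rw [wsum, wsum, ← sum_add_distrib, ← sum_add_distrib]
  refine sum_congr rfl fun i _ => ?_
  have hfi := Nat.mul_le_mul_right (i / 2) (hf i)
  have hfi' := Nat.mul_le_mul_right (i % 2) (hf i)
  rw [show (i + 1) / 2 = i / 2 + i % 2 by omega, Nat.mul_add, Nat.sub_mul, Nat.sub_mul]
  lia

theorem wsum_mod_two_eq (T T' : SYD P p q) : P.wsum (· % 2) T.f = P.wsum (· % 2) T'.f := by
  have h := T.plus_eq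
  have h' := T'.plus_eq
  rw [sum_plus_eq T.le_mult] at h
  rw [sum_plus_eq T'.le_mult] at h'
  omega

def ofFun (T : SYD P p q) (g : ℕ → ℕ) (hg : ∀ i, g i ≤ P.mult i)
    (hodd : P.wsum (· % 2) g = P.wsum (· % 2) T.f) : SYD P p q where
  f := g
  le_mult := hg
  plus_eq := by rw [sum_plus_eq hg, hodd, ← sum_plus_eq T.le_mult, T.plus_eq]
  minus_eq := by
    have h := sum_minus_add hg
    have hT := sum_minus_add T.le_mult
    rw [T.minus_eq] at hT
    omega

theorem exists_add_single (T : SYD P p q) {e : ℕ} (he : e % 2 = 0) (hlt : T.f e < P.mult e) :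
    ∃ T' : SYD P p q, T'.f = T.f + Pi.single e 1 := by
  have heS := mem_partsSet_of_mult_pos (Nat.zero_lt_of_lt hlt)
  refine ⟨T.ofFun (T.f + Pi.single e 1) (fun i => ?_) ?_, rfl⟩
  · have := T.le_mult i
    by_cases hi : i = e <;> simp [hi] <;> omega
  · rw [wsum_add, wsum_single _ heS, he, add_zero]

theorem exists_sub_single (T : SYD P p q) {e : ℕ} (he : e % 2 = 0) (hpos : 0 < T.f e) :
    ∃ T' : SYD P p q, T.f = T'.f + Pi.single e 1 := by
  have heS := mem_partsSet_of_mult_pos (hpos.trans_le (T.le_mult e))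
  have hsplit : T.f - Pi.single e 1 + Pi.single e 1 = T.f := by
    funext i
    by_cases hi : i = e <;> simp [hi]
    omega
  refine ⟨T.ofFun (T.f - Pi.single e 1) (fun i => ?_) ?_, hsplit.symm⟩
  · exact (Nat.sub_le _ _).trans (T.le_mult i)
  · have h := congrArg (P.wsum (· % 2)) hsplit
    rw [wsum_add, wsum_single _ heS, he, add_zero] at h
    exact h

theorem exists_transfer (T : SYD P p q) {i j : ℕ} (hij : i % 2 = j % 2) (hi : 0 < T.f i)
    (hj : T.f j < P.mult j) :
    ∃ T' : SYD P p q, T'.f + Pi.single i 1 = T.f + Pi.single j 1 := by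
  have hiS := mem_partsSet_of_mult_pos (hi.trans_le (T.le_mult i))
  have hjS := mem_partsSet_of_mult_pos (Nat.zero_lt_of_lt hj)
  have hsplit : T.f + Pi.single j 1 - Pi.single i 1 + Pi.single i 1 = T.f + Pi.single j 1 := by
    funext x
    by_cases hx : x = i <;> simp [Pi.single_apply, hx]
    omega
  refine ⟨T.ofFun (T.f + Pi.single j 1 - Pi.single i 1) (fun x => ?_) ?_, hsplit⟩
  · have := T.le_mult x
    by_cases hx : x = j <;> simp [Pi.single_apply, hx] <;> omega
  · have h := congrArg (P.wsum (· % 2)) hsplit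
    rw [wsum_add, wsum_add, wsum_single _ hiS, wsum_single _ hjS, hij] at h
    exact Nat.add_right_cancel h

end SYD

section PiSingle

variable {ι : Type*} [DecidableEq ι]

theorem add_single_eq_add_single_iff {f g : ι → ℕ} {i j : ι} (hij : i ≠ j) :
    f + Pi.single j 1 = g + Pi.single i 1 ↔
      (∀ x, x ≠ i → x ≠ j → f x = g x) ∧ f i = g i + 1 ∧ g j = f j + 1 := by
  constructor
  · intro h
    refine ⟨fun x hxi hxj => ?_, ?_, ?_⟩
    · simpa [hxi, hxj] using congrFun h x
    · simpa [hij] using congrFun h i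
    · simpa [hij] using (congrFun h j).symm
  · rintro ⟨hx, hi, hj⟩
    funext x
    by_cases hxi : x = i
    · subst hxi; simp [hij, hi]
    · by_cases hxj : x = j
      · subst hxj; simp [hxi, hj]
      · simp [hxi, hxj, hx x hxi hxj]

theorem eq_add_single_iff {f g : ι → ℕ} {j : ι} :
    f = g + Pi.single j 1 ↔ (∀ x, x ≠ j → f x = g x) ∧ f j = g j + 1 := by
  constructor
  · rintro rfl
    exact ⟨fun x hx => by simp [hx], by simp⟩
  · rintro ⟨hx, hj⟩
    funext x
    by_cases hxj : x = j
    · subst hxj; simp [hj]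
    · simp [hxj, hx x hxj]

end PiSingle

section Adjacency

variable {P : PartitionData} {p q : ℕ}

theorem adjRel_one_iff {T T' : SYD P p q} :
    AdjRel P 1 T T' ↔
      (∃ i j, Consec P i j ∧
        (T.f + Pi.single j 1 = T'.f + Pi.single i 1 ∨
          T'.f + Pi.single j 1 = T.f + Pi.single i 1)) ∨
      ∃ j, IsMinPart P j ∧ (T.f = T'.f + Pi.single j 1 ∨ T'.f = T.f + Pi.single j 1) := by
  refine or_congr (exists₂_congr fun i j => ?_) (exists_congr fun j => ?_)
  · constructor
    · rintro ⟨hc, hx, h | h⟩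
      · exact ⟨hc, .inl ((add_single_eq_add_single_iff hc.2.2.1.ne').mpr ⟨hx, h⟩)⟩
      · exact ⟨hc, .inr ((add_single_eq_add_single_iff hc.2.2.1.ne').mpr
          ⟨fun x hi hj => (hx x hi hj).symm, h⟩)⟩
    · rintro ⟨hc, h | h⟩
      · exact ⟨hc, ((add_single_eq_add_single_iff hc.2.2.1.ne').mp h).1,
          .inl ((add_single_eq_add_single_iff hc.2.2.1.ne').mp h).2⟩
      · obtain ⟨hx, h⟩ := (add_single_eq_add_single_iff hc.2.2.1.ne').mp h
        exact ⟨hc, fun x hi hj => (hx x hi hj).symm, .inr h⟩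
  · constructor
    · rintro ⟨hm, hx, h | h⟩
      · exact ⟨hm, .inl (eq_add_single_iff.mpr ⟨hx, h⟩)⟩
      · exact ⟨hm, .inr (eq_add_single_iff.mpr ⟨fun x hx' => (hx x hx').symm, h⟩)⟩
    · rintro ⟨hm, h | h⟩
      · exact ⟨hm, (eq_add_single_iff.mp h).1, .inl (eq_add_single_iff.mp h).2⟩
      · obtain ⟨hx, h⟩ := eq_add_single_iff.mp h
        exact ⟨hm, fun x hx' => (hx x hx').symm, .inr h⟩

/-- Since both ends have the same number of odd `+`-boxes, an edge moves a row only
between part lengths of equal parity, and changes the smallest part only if it is even. -/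
theorem wsum_eq_of_adjRel (w : ℕ → ℕ)
    (hcons : ∀ i j, Consec P i j → i % 2 = j % 2 → w i = w j)
    (hmin : ∀ j, IsMinPart P j → j % 2 = 0 → w j = 0)
    {T T' : SYD P p q} (h : AdjRel P 1 T T') : P.wsum w T.f = P.wsum w T'.f := by
  have hodd := T.wsum_mod_two_eq T'
  rcases adjRel_one_iff.mp h with ⟨i, j, hc, h | h⟩ | ⟨j, hm, h | h⟩
  · exact wsum_eq_of_add_single_eq hc.1 hc.2.1 (hcons i j hc) hodd h
  · exact (wsum_eq_of_add_single_eq hc.1 hc.2.1 (hcons i j hc) hodd.symm h).symm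
  · exact wsum_eq_of_eq_add_single hm.1 (hmin j hm) hodd h
  · exact (wsum_eq_of_eq_add_single hm.1 (hmin j hm) hodd.symm h).symm

theorem wsum_eq_of_reachable (w : ℕ → ℕ)
    (hcons : ∀ i j, Consec P i j → i % 2 = j % 2 → w i = w j)
    (hmin : ∀ j, IsMinPart P j → j % 2 = 0 → w j = 0)
    {T T' : SYD P p q} (h : (orbitGraph P p q).Reachable T T') :
    P.wsum w T.f = P.wsum w T'.f := by
  refine h.apply_eq (fun T => P.wsum w T.f) fun T T' hadj => ?_
  rcases (SimpleGraph.fromRel_adj _ _ _).mp hadj |>.2 with h | h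
  · exact wsum_eq_of_adjRel w hcons hmin h
  · exact (wsum_eq_of_adjRel w hcons hmin h).symm

end Adjacency

section Disconnected

variable {P : PartitionData} {p q : ℕ}

/-- The number of `+`-leading rows of even length exceeding the odd part `t` is constant
along edges, while adding or removing one at the even part `e > t` keeps the signature. -/
theorem not_connected_of_odd_lt_even (T : SYD P p q) {t e : ℕ} (ht : t ∈ P.partsSet)
    (he : e ∈ P.partsSet) (ht2 : t % 2 = 1) (he2 : e % 2 = 0) (hte : t < e) :
    ¬ (orbitGraph P p q).Connected := by
  intro hconn
  let w : ℕ → ℕ := fun x => if t < x ∧ x % 2 = 0 then 1 else 0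
  have hcons : ∀ i j, Consec P i j → i % 2 = j % 2 → w i = w j := by
    rintro i j ⟨-, -, hji, hbetween⟩ hij
    have := hbetween t ht
    simp only [w]
    split_ifs <;> omega
  have hmin : ∀ j, IsMinPart P j → j % 2 = 0 → w j = 0 := by
    rintro j ⟨-, hj⟩ -
    have := hj t ht
    simp only [w]
    split_ifs <;> omega
  have hinv : ∀ T' : SYD P p q, P.wsum w T'.f = P.wsum w T.f := fun T' =>
    wsum_eq_of_reachable w hcons hmin (hconn T' T)
  have hwe : w e = 1 := by simp [w, hte, he2]
  rcases (T.le_mult e).lt_or_eq with hlt | heq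
  · obtain ⟨T', hT'⟩ := T.exists_add_single he2 hlt
    have := hinv T'
    rw [hT', wsum_add, wsum_single _ he, hwe] at this
    omega
  · obtain ⟨T', hT'⟩ := T.exists_sub_single he2 (heq ▸ mult_pos he)
    have := hinv T'
    rw [hT', wsum_add, wsum_single _ he, hwe] at this
    omega

end Disconnected

namespace PartitionData

def OddAboveEven (P : PartitionData) : Prop :=
  ∀ a ∈ P.partsSet, ∀ b ∈ P.partsSet, a % 2 = 1 → b % 2 = 0 → b < a

/-- Rows of even length flow down and out at the smallest part, rows of odd length flow up. -/
def descentWeight (P : PartitionData) (x : ℕ) : ℕ :=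
  if x % 2 = 0 then x else P.partsSet.sup id - x

/-- The terminal diagram of the descent. -/
def IsCanonical (P : PartitionData) (f : ℕ → ℕ) : Prop :=
  (∀ i ∈ P.partsSet, i % 2 = 0 → f i = 0) ∧
    ∀ i ∈ P.partsSet, ∀ j ∈ P.partsSet, i % 2 = 1 → j % 2 = 1 → j < i → 0 < f j →
      f i = P.mult i

end PartitionData

section Connected

variable {P : PartitionData} {p q : ℕ}

theorem PartitionData.IsCanonical.not_lt_of_eq_above {T : SYD P p q} (hC : IsCanonical P T.f)
    (T' : SYD P p q) {i : ℕ} (hi : i ∈ P.partsSet) (hi2 : i % 2 = 1)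
    (habove : ∀ x ∈ P.partsSet, i < x → T.f x = T'.f x) : ¬ T.f i < T'.f i := by
  intro hlt
  have hbelow : ∑ x ∈ P.partsSet with ¬ i ≤ x, x % 2 * T.f x = 0 := by
    refine sum_eq_zero fun x hx => ?_
    rw [mem_filter, not_le] at hx
    rcases Nat.mod_two_eq_zero_or_one x with hx2 | hx2
    · rw [hx2, zero_mul]
    · have := hC.2 i hi x hx.1 hi2 hx2 hx.2
      have := T'.le_mult i
      have : T.f x = 0 := by omega
      rw [this, mul_zero]
  have habove' : ∑ x ∈ P.partsSet with i ≤ x, x % 2 * T.f x <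
      ∑ x ∈ P.partsSet with i ≤ x, x % 2 * T'.f x := by
    refine sum_lt_sum (fun x hx => ?_) ⟨i, by simp [hi], by simpa [hi2] using hlt⟩
    rw [mem_filter] at hx
    rcases hx.2.lt_or_eq with hix | rfl
    · rw [habove x hx.1 hix]
    · exact Nat.mul_le_mul_left _ hlt.le
  have hodd := T.wsum_mod_two_eq T'
  rw [wsum, wsum, ← sum_filter_add_sum_filter_not P.partsSet (i ≤ ·),
    ← sum_filter_add_sum_filter_not P.partsSet (i ≤ ·) (fun x => x % 2 * T'.f x)] at hodd
  omega

/-- The odd-length rows of a canonical diagram are determined by their number, which is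
the same for all diagrams of signature `(p, q)`. -/
theorem eq_of_isCanonical {T T' : SYD P p q} (hC : IsCanonical P T.f)
    (hC' : IsCanonical P T'.f) : T = T' := by
  ext1
  by_contra hne
  have hdiff : (P.partsSet.filter fun x => T.f x ≠ T'.f x).Nonempty := by
    by_contra! hempty
    refine hne (funext fun x => ?_)
    by_cases hx : x ∈ P.partsSet
    · by_contra hx'
      exact (filter_eq_empty_iff.mp hempty) hx hx'
    · rw [T.f_eq_zero_of_notMem hx, T'.f_eq_zero_of_notMem hx]
  obtain ⟨i, hi, hmax⟩ := exists_max_image _ id hdiff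
  rw [mem_filter] at hi
  have hi2 : i % 2 = 1 := by
    by_contra hi2
    exact hi.2 ((hC.1 i hi.1 (by omega)).trans (hC'.1 i hi.1 (by omega)).symm)
  have habove : ∀ x ∈ P.partsSet, i < x → T.f x = T'.f x := fun x hx hix => by
    by_contra hx'
    exact (hmax x (mem_filter.mpr ⟨hx, hx'⟩)).not_gt hix
  rcases Nat.lt_or_gt_of_ne hi.2 with hlt | hlt
  · exact hC.not_lt_of_eq_above T' hi.1 hi2 habove hlt
  · exact hC'.not_lt_of_eq_above T hi.1 hi2 (fun x hx hix => (habove x hx hix).symm) hlt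

theorem exists_adj_lt_of_even_pos (hP : OddAboveEven P) (T : SYD P p q)
    (h : ∃ e ∈ P.partsSet, e % 2 = 0 ∧ T.f e ≠ 0) :
    ∃ T₂ : SYD P p q, AdjRel P 1 T T₂ ∧
      P.wsum P.descentWeight T₂.f < P.wsum P.descentWeight T.f := by
  obtain ⟨e, he, hemin⟩ := exists_min_image (P.partsSet.filter fun x => x % 2 = 0 ∧ T.f x ≠ 0)
    id (by simpa [Finset.Nonempty] using h)
  simp only [mem_filter, id] at he hemin
  obtain ⟨heS, he2, hpos⟩ := he
  by_cases hbot : ∃ y ∈ P.partsSet, y < e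
  · obtain ⟨j, hc⟩ := exists_consec_below heS hbot
    have hj2 : j % 2 = 0 := by
      by_contra hj2
      exact (hP j hc.2.1 e heS (by omega) he2).not_gt hc.2.2.1
    have hfj : T.f j = 0 := by
      by_contra hfj
      exact (hemin j ⟨hc.2.1, hj2, hfj⟩).not_gt hc.2.2.1
    obtain ⟨T₂, hT₂⟩ := T.exists_transfer (by omega : e % 2 = j % 2) (Nat.pos_of_ne_zero hpos)
      (hfj ▸ mult_pos hc.2.1)
    refine ⟨T₂, adjRel_one_iff.mpr (.inl ⟨e, j, hc, .inl hT₂.symm⟩), ?_⟩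
    have hΦ := congrArg (P.wsum P.descentWeight) hT₂
    rw [wsum_add, wsum_add, wsum_single _ heS, wsum_single _ hc.2.1] at hΦ
    have hw : P.descentWeight j < P.descentWeight e := by
      simpa [descentWeight, hj2, he2] using hc.2.2.1
    omega
  · push Not at hbot
    obtain ⟨T₂, hT₂⟩ := T.exists_sub_single he2 (Nat.pos_of_ne_zero hpos)
    refine ⟨T₂, adjRel_one_iff.mpr (.inr ⟨e, ⟨heS, hbot⟩, .inl hT₂⟩), ?_⟩
    have hΦ := congrArg (P.wsum P.descentWeight) hT₂
    rw [wsum_add, wsum_single _ heS] at hΦ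
    have hw : 0 < P.descentWeight e := by
      simpa [descentWeight, he2] using pos_of_mem_partsSet heS
    omega

theorem exists_adj_lt_of_not_packed (hP : OddAboveEven P) (T : SYD P p q)
    (h : ∃ i ∈ P.partsSet, ∃ j ∈ P.partsSet, i % 2 = 1 ∧ j % 2 = 1 ∧ j < i ∧ 0 < T.f j ∧
      T.f i ≠ P.mult i) :
    ∃ T₂ : SYD P p q, AdjRel P 1 T T₂ ∧
      P.wsum P.descentWeight T₂.f < P.wsum P.descentWeight T.f := by
  obtain ⟨j, hj, hjmax⟩ := exists_max_image (P.partsSet.filter fun j => j % 2 = 1 ∧ 0 < T.f j ∧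
      ∃ i ∈ P.partsSet, i % 2 = 1 ∧ j < i ∧ T.f i ≠ P.mult i) id
    (by
      obtain ⟨i, hi, j, hj, hi2, hj2, hji, hfj, hfi⟩ := h
      exact ⟨j, mem_filter.mpr ⟨hj, hj2, hfj, i, hi, hi2, hji, hfi⟩⟩)
  simp only [mem_filter, id] at hj hjmax
  obtain ⟨hjS, hj2, hfj, i, hiS, hi2, hji, hfi⟩ := hj
  obtain ⟨a, hc⟩ := exists_consec_above hjS ⟨i, hiS, hji⟩
  have ha2 : a % 2 = 1 := by
    by_contra ha2
    exact (hP j hjS a hc.1 hj2 (by omega)).not_gt hc.2.2.1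
  -- otherwise `a` itself would be a larger candidate for `j`
  have hfa : T.f a < P.mult a := by
    by_contra hfa
    have hfa : T.f a = P.mult a := le_antisymm (T.le_mult a) (not_lt.mp hfa)
    have hai : a < i := by
      have := hc.2.2.2 i hiS
      have : a ≠ i := fun h => hfi (h ▸ hfa)
      omega
    exact (hjmax a ⟨hc.1, ha2, hfa ▸ mult_pos hc.1, i, hiS, hi2, hai, hfi⟩).not_gt hc.2.2.1
  obtain ⟨T₂, hT₂⟩ := T.exists_transfer (by omega : j % 2 = a % 2) hfj hfa
  refine ⟨T₂, adjRel_one_iff.mpr (.inl ⟨a, j, hc, .inr hT₂⟩), ?_⟩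
  have hΦ := congrArg (P.wsum P.descentWeight) hT₂
  rw [wsum_add, wsum_add, wsum_single _ hjS, wsum_single _ hc.1] at hΦ
  have hw : P.descentWeight a < P.descentWeight j := by
    have : a ≤ P.partsSet.sup id := le_sup (f := id) hc.1
    rw [descentWeight, descentWeight, if_neg (by omega), if_neg (by omega)]
    exact Nat.sub_lt_sub_left (hc.2.2.1.trans_le this) hc.2.2.1
  omega

theorem connected_of_oddAboveEven (hP : OddAboveEven P) (hne : Nonempty (SYD P p q)) :
    (orbitGraph P p q).Connected := by
  refine SimpleGraph.connected_of_exists_adj_lt (fun T => P.wsum P.descentWeight T.f)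
    (fun T => IsCanonical P T.f) (fun _ _ => eq_of_isCanonical) fun T hT => ?_
  obtain ⟨T₂, hadj, hlt⟩ : ∃ T₂ : SYD P p q, AdjRel P 1 T T₂ ∧
      P.wsum P.descentWeight T₂.f < P.wsum P.descentWeight T.f := by
    simp only [IsCanonical, not_and_or] at hT
    push Not at hT
    rcases hT with h | h
    · exact exists_adj_lt_of_even_pos hP T h
    · exact exists_adj_lt_of_not_packed hP T h
  exact ⟨T₂, (SimpleGraph.fromRel_adj _ _ _).mpr ⟨fun h => hlt.ne (h ▸ rfl), .inl hadj⟩, hlt⟩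

end Connected

theorem PartitionData.exists_odd_even_split_iff (P : PartitionData) :
    (∃ r, r ≤ P.len ∧ (∀ j, 1 ≤ j → j ≤ r → Odd (P.l j)) ∧
        ∀ j, r < j → j ≤ P.len → Even (P.l j)) ↔ P.OddAboveEven := by
  constructor
  · rintro ⟨r, -, hodd, heven⟩ a ha b hb ha2 hb2
    obtain ⟨ja, hja, hjal, rfl⟩ := mem_partsSet.mp ha
    obtain ⟨jb, hjb, hjbl, rfl⟩ := mem_partsSet.mp hb
    have hjar : ja ≤ r := by
      by_contra
      have := Nat.even_iff.mp (heven ja (by omega) hjal)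
      omega
    have hrjb : r < jb := by
      by_contra
      have := Nat.odd_iff.mp (hodd jb hjb (by omega))
      omega
    have := P.l_le_l hja (hjar.trans hrjb.le)
    omega
  · intro hP
    set r := ((Icc 1 P.len).filter fun j => Odd (P.l j)).sup id
    have hr : r ≤ P.len := Finset.sup_le fun j hj => (mem_Icc.mp (mem_filter.mp hj).1).2
    refine ⟨r, hr, fun j hj hjr => ?_, fun j hrj hjl => ?_⟩
    · by_contra hj2
      rw [Nat.not_odd_iff_even, Nat.even_iff] at hj2
      have hjS : P.l j ∈ P.partsSet := mem_partsSet.mpr ⟨j, hj, hjr.trans hr, rfl⟩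
      refine hjr.not_gt ((Finset.sup_lt_iff (by rw [Nat.bot_eq_zero]; omega)).mpr fun k hk => ?_)
      rw [mem_filter, mem_Icc, Nat.odd_iff] at hk
      show k < j
      have := hP _ (mem_partsSet.mpr ⟨k, hk.1.1, hk.1.2, rfl⟩) _ hjS hk.2 hj2
      by_contra hkj
      have := P.l_le_l hj (not_lt.mp hkj)
      omega
    · by_contra hj2
      rw [Nat.not_even_iff_odd] at hj2
      exact hrj.not_ge (le_sup (f := id) (mem_filter.mpr ⟨mem_Icc.mpr ⟨by omega, hjl⟩, hj2⟩))

theorem stmt11_general (P : PartitionData) (p q : ℕ)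
    (hne : Nonempty (SYD P p q)) :
    (orbitGraph P p q).Connected ↔
      ∃ r, r ≤ P.len ∧ (∀ j, 1 ≤ j → j ≤ r → Odd (P.l j)) ∧
        ∀ j, r < j → j ≤ P.len → Even (P.l j) := by
  rw [P.exists_odd_even_split_iff]
  refine ⟨fun hconn a ha b hb ha2 hb2 => ?_, fun hP => connected_of_oddAboveEven hP hne⟩
  by_contra hba
  obtain ⟨T⟩ := hne
  exact not_connected_of_odd_lt_even T ha hb ha2 hb2 (by omega) hconn

/-- `Γ(λ;p,q)` is connected iff there is `0 ≤ r ≤ ℓ` such that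
`λ_1, …, λ_r` are all odd and `λ_{r+1}, …, λ_ℓ` are all even. -/
theorem stmt11 (P : PartitionData) (p q : ℕ)
    (hn : P.boxSum = p + q) (hne : Nonempty (SYD P p q)) :
    (orbitGraph P p q).Connected ↔
      ∃ r, r ≤ P.len ∧ (∀ j, 1 ≤ j → j ≤ r → Odd (P.l j)) ∧
        ∀ j, r < j → j ≤ P.len → Even (P.l j) :=
  stmt11_general P p q hne
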